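/- Let G = (V,E) be a finite bi-directed graph, A ⊆ V, and let C, C̄ be nonempty connected sets in G. Consider log p_A^V(q) as a function of the variables (q_C : ∅ ≠ C ⊆ V connected) on the open set where p_A^V(q) > 0. Then the mixed second partial derivative ∂²(log p_A^V)/∂q_C ∂q_{C̄} equals: (i) 0, if (spo(C) ∩ (A∖C)) ∪ (spo(C̄) ∩ (A∖C̄)) ≠ ∅; (ii) −(−1)^{|C∖A|}(−1)^{|C̄∖A|} · p_{A∖C}^{V∖spo(C)}(q) · p_{A∖C̄}^{V∖spo(C̄)}(q) / (p_A^V(q))², if (spo(C) ∩ (A∖C)) ∪ (spo(C̄) ∩ (A∖C̄)) = ∅ and C̄ ∩ spo(C) ≠ ∅; (iii) (−1)^{|(C∪C̄)∖A|} · p_{A∖(C∪C̄)}^{V∖spo(C∪C̄)}(q) / p_A^V(q) − (−1)^{|C∖A|}(−1)^{|C̄∖A|} · p_{A∖C}^{V∖spo(C)}(q) · p_{A∖C̄}^{V∖spo(C̄)}(q) / (p_A^V(q))², if (spo(C) ∩ (A∖C)) ∪ (spo(C̄) ∩ (A∖C̄)) = ∅ and C̄ ∩ spo(C) = ∅. 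-/

import Mathlib

/-!
For a nonempty connected `C`, the polynomial `p_A^W` is affine in `q_C`: the sets `B` having `C`
as a component are exactly `C ∪ B'` with `A ∖ C ⊆ B' ⊆ W ∖ spo(C)`, and then
`[C ∪ B']_G = {C} ∪ [B']_G`. Hence `∂p_A^W/∂q_C = (-1)^|C∖A| p_{A∖C}^{W∖spo(C)}` when
`C ⊆ W` and `spo(C) ∩ (A ∖ C) = ∅`, and `0` otherwise. The Hessian of `log p_A^V` follows from
the quotient rule, applying the same formula to `p_{A∖C̄}^{V∖spo(C̄)}`, in which `C` can only
be a component when it avoids `spo(C̄)`, i.e. when `C̄ ∩ spo(C) = ∅`.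
-/

open Finset

namespace BMMI

variable {V : Type*} [Fintype V] [DecidableEq V]

/-- `Pr p A a` is the probability of the event `X_A = a|_A` under `p`. -/
def Pr (p : (V → Bool) → ℝ) (A : Finset V) (a : V → Bool) : ℝ :=
  ∑ i ∈ Finset.univ.filter (fun i : V → Bool => ∀ v ∈ A, i v = a v), p i

/-- `p` is a binary distribution on `V`. -/
def IsDist (p : (V → Bool) → ℝ) : Prop :=
  (∀ i, 0 ≤ p i) ∧ ∑ i : V → Bool, p i = 1

/-- `Pr2 p S T a b` is the probability of the joint event `X_S = a|_S, X_T = b|_T`. -/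
def Pr2 (p : (V → Bool) → ℝ) (S T : Finset V) (a b : V → Bool) : ℝ :=
  ∑ i ∈ Finset.univ.filter
      (fun i : V → Bool => (∀ v ∈ S, i v = a v) ∧ (∀ v ∈ T, i v = b v)), p i

/-- `X_S` and `X_T` are independent under `p`. -/
def Indep (p : (V → Bool) → ℝ) (S T : Finset V) : Prop :=
  ∀ a b : V → Bool, Pr2 p S T a b = Pr p S a * Pr p T b

/-- `spo G A` consists of `A` together with all vertices adjacent to a vertex of `A`. -/
def spo (G : SimpleGraph V) [DecidableRel G.Adj] (A : Finset V) : Finset V :=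
  Finset.univ.filter (fun w => w ∈ A ∨ ∃ v ∈ A, G.Adj v w)

/-- `C` is connected in `G`: every pair of vertices of `C` is joined by a walk
all of whose vertices lie in `C`. -/
def Conn (G : SimpleGraph V) (C : Finset V) : Prop :=
  ∀ v ∈ C, ∀ w ∈ C, ∃ W : G.Walk v w, ∀ x ∈ W.support, x ∈ C

/-- The connected set Markov property for the bi-directed graph `G`. -/
def CSMP (G : SimpleGraph V) [DecidableRel G.Adj] (p : (V → Bool) → ℝ) : Prop :=
  ∀ C : Finset V, C.Nonempty → Conn G C → Indep p C (Finset.univ \ spo G C)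

/-- `C` is an inclusion-maximal connected subset of `D` (a connected component of the
induced subgraph on `D`). -/
def IsMaxConnComp (G : SimpleGraph V) (D C : Finset V) : Prop :=
  C ⊆ D ∧ C.Nonempty ∧ Conn G C ∧
    ∀ C' : Finset V, C ⊆ C' → C' ⊆ D → Conn G C' → C' = C

/-- The Möbius parameter `q_A(p) = P(X_A = 0)`. -/
def qM (p : (V → Bool) → ℝ) (A : Finset V) : ℝ := Pr p A (fun _ => false)

open Classical in
/-- `[B]_G`: the finset of inclusion-maximal connected subsets of `B`. -/
noncomputable def maxConnComps (G : SimpleGraph V) (B : Finset V) :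
    Finset (Finset V) :=
  B.powerset.filter (fun C => IsMaxConnComp G B C)

/-- The polynomial `p_A^W(q) = Σ_{A ⊆ B ⊆ W} (−1)^{|B∖A|} ∏_{C ∈ [B]_G} q_C`
in the variables `q`. -/
noncomputable def pPoly (G : SimpleGraph V) (A W : Finset V)
    (q : Finset V → ℝ) : ℝ :=
  ∑ B ∈ Finset.univ.filter (fun B : Finset V => A ⊆ B ∧ B ⊆ W),
    (-1 : ℝ) ^ (B \ A).card * ∏ C ∈ maxConnComps G B, q C

/-- The partial derivative of `f` with respect to the coordinate `C`. -/
noncomputable def pd (C : Finset V) (f : (Finset V → ℝ) → ℝ)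
    (q : Finset V → ℝ) : ℝ :=
  deriv (fun s : ℝ => f (Function.update q C s)) (q C)

end BMMI

namespace BMMI

section Connectivity

variable {V : Type*} {G : SimpleGraph V}

lemma Conn.exists_adj_of_subset {C D : Finset V} (hD : Conn G D) (hCD : C ⊆ D)
    (hC : C.Nonempty) (hDC : ¬ D ⊆ C) : ∃ a ∈ C, ∃ b ∈ D, b ∉ C ∧ G.Adj a b := by
  obtain ⟨x, hx⟩ := hC
  obtain ⟨y, hyD, hyC⟩ := Finset.not_subset.1 hDC
  obtain ⟨W, hW⟩ := hD x (hCD hx) y hyD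
  obtain ⟨d, hd, hd₁, hd₂⟩ := W.exists_boundary_dart (C : Set V) hx hyC
  exact ⟨d.fst, hd₁, d.snd, hW _ (W.dart_snd_mem_support_of_mem_darts hd), hd₂, d.adj⟩

lemma Conn.insert_of_adj [DecidableEq V] {C : Finset V} (hc : Conn G C) {v w : V} (hv : v ∈ C)
    (h : G.Adj v w) : Conn G (insert w C) := by
  have from_w : ∀ b ∈ insert w C, ∃ W : G.Walk w b, ∀ x ∈ W.support, x ∈ insert w C := by
    intro b hb
    rcases Finset.mem_insert.1 hb with rfl | hb
    · exact ⟨.nil, by simp⟩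
    · obtain ⟨W, hW⟩ := hc v hv b hb
      refine ⟨.cons h.symm W, fun x hx => ?_⟩
      rcases List.mem_cons.1 (W.support_cons h.symm ▸ hx) with rfl | hx
      · exact Finset.mem_insert_self _ _
      · exact Finset.mem_insert_of_mem (hW x hx)
  intro a ha b hb
  obtain ⟨Wa, hWa⟩ := from_w a ha
  obtain ⟨Wb, hWb⟩ := from_w b hb
  refine ⟨Wa.reverse.append Wb, fun x hx => ?_⟩
  rcases (SimpleGraph.Walk.mem_support_append_iff _ _).1 hx with hx | hx
  · exact hWa x (by simpa using hx)
  · exact hWb x hx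

lemma mem_maxConnComps {B C : Finset V} : C ∈ maxConnComps G B ↔ IsMaxConnComp G B C := by
  classical
  rw [maxConnComps, Finset.mem_filter, Finset.mem_powerset]
  exact and_iff_right_of_imp fun h => h.1

end Connectivity

section Components

variable {V : Type*} [Fintype V] [DecidableEq V] {G : SimpleGraph V} [DecidableRel G.Adj]

@[simp]
lemma mem_spo {w : V} {A : Finset V} : w ∈ spo G A ↔ w ∈ A ∨ ∃ v ∈ A, G.Adj v w := by
  simp [spo]

lemma subset_spo (A : Finset V) : A ⊆ spo G A := fun _ hw => mem_spo.2 (Or.inl hw)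

lemma spo_union (C C' : Finset V) : spo G (C ∪ C') = spo G C ∪ spo G C' := by
  ext w
  simp only [mem_spo, Finset.mem_union]
  aesop

lemma disjoint_spo_comm {C D : Finset V} : Disjoint C (spo G D) ↔ Disjoint D (spo G C) := by
  suffices ∀ C D : Finset V, Disjoint C (spo G D) → Disjoint D (spo G C) from
    ⟨this C D, this D C⟩
  intro C D h
  refine Finset.disjoint_left.2 fun x hxD hx => ?_
  rcases mem_spo.1 hx with hxC | ⟨v, hvC, hvx⟩
  · exact Finset.disjoint_left.1 h hxC (subset_spo D hxD)
  · exact Finset.disjoint_left.1 h hvC (mem_spo.2 (Or.inr ⟨x, hxD, hvx.symm⟩))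

lemma mem_maxConnComps_iff {B C : Finset V} (hC : C.Nonempty) (hc : Conn G C) :
    C ∈ maxConnComps G B ↔ C ⊆ B ∧ Disjoint (B \ C) (spo G C) := by
  rw [mem_maxConnComps]
  constructor
  · rintro ⟨hCB, -, -, hmax⟩
    refine ⟨hCB, Finset.disjoint_left.2 fun w hw hws => ?_⟩
    obtain ⟨hwB, hwC⟩ := Finset.mem_sdiff.1 hw
    rcases mem_spo.1 hws with h | ⟨v, hv, hvw⟩
    · exact hwC h
    · have := hmax _ (Finset.subset_insert w C) (Finset.insert_subset hwB hCB)
        (hc.insert_of_adj hv hvw)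
      exact hwC (this ▸ Finset.mem_insert_self w C)
  · rintro ⟨hCB, hsep⟩
    refine ⟨hCB, hC, hc, fun D hCD hDB hd => ?_⟩
    by_contra hne
    obtain ⟨a, ha, b, hbD, hbC, hab⟩ :=
      hd.exists_adj_of_subset hCD hC fun h => hne (Finset.Subset.antisymm h hCD)
    exact Finset.disjoint_left.1 hsep (Finset.mem_sdiff.2 ⟨hDB hbD, hbC⟩)
      (mem_spo.2 (Or.inr ⟨a, ha, hab⟩))

lemma Conn.subset_or_subset_of_disjoint_spo {B C D : Finset V} (hsep : Disjoint B (spo G C))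
    (hd : Conn G D) (hsub : D ⊆ C ∪ B) : D ⊆ C ∨ D ⊆ B := by
  by_contra! ⟨hDC, hDB⟩
  obtain ⟨x, hxD, hxB⟩ := Finset.not_subset.1 hDB
  have hxC : x ∈ C := (Finset.mem_union.1 (hsub hxD)).resolve_right hxB
  obtain ⟨a, ha, b, hbD, hb, hab⟩ := hd.exists_adj_of_subset Finset.inter_subset_right
    ⟨x, Finset.mem_inter.2 ⟨hxC, hxD⟩⟩ fun h => hDC (h.trans Finset.inter_subset_left)
  have hbC : b ∉ C := fun hbC => hb (Finset.mem_inter.2 ⟨hbC, hbD⟩)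
  exact Finset.disjoint_left.1 hsep ((Finset.mem_union.1 (hsub hbD)).resolve_left hbC)
    (mem_spo.2 (Or.inr ⟨a, (Finset.mem_inter.1 ha).1, hab⟩))

lemma erase_maxConnComps {B C : Finset V} (hC : C.Nonempty) (hc : Conn G C)
    (h : C ∈ maxConnComps G B) : (maxConnComps G B).erase C = maxConnComps G (B \ C) := by
  obtain ⟨hCB, hsep⟩ := (mem_maxConnComps_iff hC hc).1 h
  have split : ∀ {D}, Conn G D → D ⊆ B → D ⊆ C ∨ D ⊆ B \ C := fun hd hDB =>
    hd.subset_or_subset_of_disjoint_spo hsep (by rwa [Finset.union_sdiff_of_subset hCB])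
  ext D
  rw [Finset.mem_erase, mem_maxConnComps, mem_maxConnComps]
  constructor
  · rintro ⟨hDC, hDB, hD, hd, hmax⟩
    refine ⟨(split hd hDB).resolve_left fun h => hDC (hmax C h hCB hc).symm, hD, hd,
      fun E hDE hEB hE => hmax E hDE (hEB.trans Finset.sdiff_subset) hE⟩
  · rintro ⟨hDB, ⟨d, hd⟩, hdc, hmax⟩
    have hdC : d ∉ C := (Finset.mem_sdiff.1 (hDB hd)).2
    refine ⟨fun h => hdC (h ▸ hd), hDB.trans Finset.sdiff_subset, ⟨d, hd⟩, hdc,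
      fun E hDE hEB hE => hmax E hDE ((split hE hEB).resolve_left fun h => hdC (h (hDE hd))) hE⟩

end Components

section Finset

variable {α : Type*} [DecidableEq α]

lemma card_sdiff_eq_add_card_sdiff_sdiff {A B C : Finset α} (hCB : C ⊆ B) :
    (B \ A).card = (C \ A).card + ((B \ C) \ (A \ C)).card := by
  rw [← Finset.card_union_of_disjoint (Finset.disjoint_left.2 fun x hx hx' =>
    (Finset.mem_sdiff.1 (Finset.mem_sdiff.1 hx').1).2 (Finset.mem_sdiff.1 hx).1)]
  congr 1
  ext x
  simp only [Finset.mem_sdiff, Finset.mem_union]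
  have := @hCB x
  tauto

end Finset

section Polynomial

variable {V : Type*} [Fintype V] [DecidableEq V] {G : SimpleGraph V} [DecidableRel G.Adj]

variable (G) in
/-- The coefficient of the affine function `q_C ↦ p_A^W(q)`, i.e. `∂p_A^W/∂q_C`. -/
noncomputable def pPolyDeriv (A W C : Finset V) (q : Finset V → ℝ) : ℝ :=
  if C ⊆ W ∧ Disjoint (spo G C) (A \ C) then
    (-1 : ℝ) ^ (C \ A).card * pPoly G (A \ C) (W \ spo G C) q
  else 0

/-- The terms of `p_A^W` in which `C` is a component are those of `p_{A∖C}^{W∖spo(C)}`,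
via `B ↦ B ∖ C`. -/
lemma sum_ite_mem_maxConnComps {A W C : Finset V} (hC : C.Nonempty) (hc : Conn G C)
    (q : Finset V → ℝ) :
    ∑ B ∈ Finset.univ.filter (fun B : Finset V => A ⊆ B ∧ B ⊆ W),
      (if C ∈ maxConnComps G B then
        (-1 : ℝ) ^ (B \ A).card * ∏ D ∈ (maxConnComps G B).erase C, q D else 0) =
      pPolyDeriv G A W C q := by
  simp only [← Finset.sum_filter, Finset.filter_filter, mem_maxConnComps_iff hC hc]
  unfold pPolyDeriv
  split_ifs with hcond
  · obtain ⟨hCW, hAC⟩ := hcond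
    rw [pPoly, Finset.mul_sum]
    refine Finset.sum_nbij' (· \ C) (C ∪ ·) ?_ ?_ ?_ ?_ ?_ <;>
      simp only [Finset.mem_filter, Finset.mem_univ, true_and]
    · rintro B ⟨⟨hAB, hBW⟩, hCB, hsep⟩
      exact ⟨Finset.sdiff_subset_sdiff hAB subset_rfl, Finset.subset_sdiff.2
        ⟨Finset.sdiff_subset.trans hBW, hsep⟩⟩
    · rintro B ⟨hAB, hBW⟩
      obtain ⟨hBW, hsep⟩ := Finset.subset_sdiff.1 hBW
      refine ⟨⟨fun x hx => ?_, Finset.union_subset hCW hBW⟩, Finset.subset_union_left,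
        Finset.union_sdiff_left C B ▸ hsep.mono_left Finset.sdiff_subset⟩
      by_cases hxC : x ∈ C
      · exact Finset.mem_union_left _ hxC
      · exact Finset.mem_union_right _ (hAB (Finset.mem_sdiff.2 ⟨hx, hxC⟩))
    · rintro B ⟨-, hCB, -⟩
      exact Finset.union_sdiff_of_subset hCB
    · rintro B ⟨-, hBW⟩
      exact Finset.union_sdiff_cancel_left
        ((Finset.subset_sdiff.1 hBW).2.mono_right (subset_spo C)).symm
    · rintro B ⟨-, hCB, hsep⟩
      rw [erase_maxConnComps hC hc ((mem_maxConnComps_iff hC hc).2 ⟨hCB, hsep⟩),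
        card_sdiff_eq_add_card_sdiff_sdiff hCB, pow_add, mul_assoc]
  · refine Finset.sum_eq_zero fun B hB => absurd ?_ hcond
    simp only [Finset.mem_filter, Finset.mem_univ, true_and] at hB
    obtain ⟨⟨hAB, hBW⟩, hCB, hsep⟩ := hB
    refine ⟨hCB.trans hBW, Finset.disjoint_right.2 fun x hx hxs => ?_⟩
    exact Finset.disjoint_left.1 hsep (Finset.sdiff_subset_sdiff hAB subset_rfl hx) hxs

lemma pPoly_update {A W C : Finset V} (hC : C.Nonempty) (hc : Conn G C)
    (q : Finset V → ℝ) (s : ℝ) :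
    pPoly G A W (Function.update q C s) =
      pPoly G A W (Function.update q C 0) + s * pPolyDeriv G A W C q := by
  rw [pPoly, pPoly, ← sum_ite_mem_maxConnComps hC hc, Finset.mul_sum, ← Finset.sum_add_distrib]
  refine Finset.sum_congr rfl fun B _ => ?_
  have hupd : ∀ t, ∀ D ∈ (maxConnComps G B).erase C, Function.update q C t D = q D :=
    fun t D hD => Function.update_of_ne (Finset.ne_of_mem_erase hD) t q
  split_ifs with hCB
  · rw [← Finset.mul_prod_erase _ _ hCB, ← Finset.mul_prod_erase _ _ hCB,
      Finset.prod_congr rfl (hupd s), Finset.prod_congr rfl (hupd 0)]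
    simp only [Function.update_self]
    ring
  · have hne : ∀ D ∈ maxConnComps G B, D ≠ C := fun D hD h => hCB (h ▸ hD)
    rw [Finset.prod_congr rfl fun D hD => Function.update_of_ne (hne D hD) s q,
      Finset.prod_congr rfl fun D hD => Function.update_of_ne (hne D hD) 0 q, mul_zero, add_zero]

lemma hasDerivAt_pPoly_update {A W C : Finset V} (hC : C.Nonempty) (hc : Conn G C)
    (q : Finset V → ℝ) (s : ℝ) :
    HasDerivAt (fun t => pPoly G A W (Function.update q C t)) (pPolyDeriv G A W C q) s := by
  refine HasDerivAt.congr_of_eventuallyEq ?_ (Filter.Eventually.of_forall (pPoly_update hC hc q))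
  simpa using ((hasDerivAt_id s).mul_const (pPolyDeriv G A W C q)).const_add
    (pPoly G A W (Function.update q C 0))

lemma pd_log_pPoly {A W C : Finset V} (hC : C.Nonempty) (hc : Conn G C)
    {q : Finset V → ℝ} (hq : pPoly G A W q ≠ 0) :
    pd C (fun r => Real.log (pPoly G A W r)) q = pPolyDeriv G A W C q / pPoly G A W q := by
  have h := (hasDerivAt_pPoly_update (A := A) (W := W) hC hc q (q C)).log
    (by rwa [Function.update_eq_self])
  rw [pd, h.deriv, Function.update_eq_self]

lemma hasDerivAt_pPolyDeriv_update {A W C C' : Finset V} (hC : C.Nonempty) (hc : Conn G C)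
    (q : Finset V → ℝ) (s : ℝ) :
    HasDerivAt (fun t => pPolyDeriv G A W C' (Function.update q C t))
      (if C' ⊆ W ∧ Disjoint (spo G C') (A \ C') then
        (-1 : ℝ) ^ (C' \ A).card * pPolyDeriv G (A \ C') (W \ spo G C') C q
      else 0) s := by
  by_cases h : C' ⊆ W ∧ Disjoint (spo G C') (A \ C')
  · rw [if_pos h]
    refine ((hasDerivAt_pPoly_update hC hc q s).const_mul _).congr_of_eventuallyEq
      (Filter.Eventually.of_forall fun t => ?_)
    simp only [pPolyDeriv, if_pos h]
  · rw [if_neg h]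
    refine (hasDerivAt_const s (0 : ℝ)).congr_of_eventuallyEq
      (Filter.Eventually.of_forall fun t => ?_)
    simp only [pPolyDeriv, if_neg h]

end Polynomial

section Hessian

open Topology

variable {V : Type*} [Fintype V] [DecidableEq V] {G : SimpleGraph V} [DecidableRel G.Adj]

lemma pd_pd_log_pPoly {A W C C' : Finset V} (hC : C.Nonempty) (hc : Conn G C)
    (hC' : C'.Nonempty) (hc' : Conn G C') {q : Finset V → ℝ} (hq : pPoly G A W q ≠ 0) :
    pd C (pd C' (fun r => Real.log (pPoly G A W r))) q =
      ((if C' ⊆ W ∧ Disjoint (spo G C') (A \ C') then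
          (-1 : ℝ) ^ (C' \ A).card * pPolyDeriv G (A \ C') (W \ spo G C') C q else 0) *
        pPoly G A W q - pPolyDeriv G A W C' q * pPolyDeriv G A W C q) / pPoly G A W q ^ 2 := by
  have hp := hasDerivAt_pPoly_update (A := A) (W := W) hC hc q (q C)
  have hq' : pPoly G A W (Function.update q C (q C)) ≠ 0 := by rwa [Function.update_eq_self]
  have hlog : (fun s => pd C' (fun r => Real.log (pPoly G A W r)) (Function.update q C s))
      =ᶠ[𝓝 (q C)] fun s =>
        pPolyDeriv G A W C' (Function.update q C s) / pPoly G A W (Function.update q C s) :=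
    (hp.continuousAt.eventually_ne hq').mono fun s hs => pd_log_pPoly hC' hc' hs
  rw [pd, hlog.deriv_eq, ((hasDerivAt_pPolyDeriv_update hC hc q (q C)).fun_div hp hq').deriv,
    Function.update_eq_self]

lemma pPolyDeriv_sdiff_spo_of_not_disjoint {A W C C' : Finset V} (h : ¬ Disjoint C (spo G C'))
    (q : Finset V → ℝ) : pPolyDeriv G A (W \ spo G C') C q = 0 :=
  if_neg fun hcond => h (Finset.subset_sdiff.1 hcond.1).2

lemma pPolyDeriv_sdiff_spo_of_disjoint {A W C C' : Finset V} (h : Disjoint C' (spo G C))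
    (q : Finset V → ℝ) :
    pPolyDeriv G (A \ C') (W \ spo G C') C q =
      if C ⊆ W ∧ Disjoint (spo G C) (A \ C) then
        (-1 : ℝ) ^ (C \ A).card * pPoly G (A \ (C ∪ C')) (W \ spo G (C ∪ C')) q
      else 0 := by
  have hCC' : Disjoint C C' := (h.mono_right (subset_spo C)).symm
  have hcond : C ⊆ W \ spo G C' ∧ Disjoint (spo G C) ((A \ C') \ C) ↔
      C ⊆ W ∧ Disjoint (spo G C) (A \ C) := by
    rw [Finset.subset_sdiff, disjoint_spo_comm, and_iff_left h, and_congr_right_iff]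
    intro
    simp only [Finset.disjoint_left, Finset.mem_sdiff]
    have := Finset.disjoint_right.1 h
    grind
  have hsign : C \ (A \ C') = C \ A := by
    ext x
    have := fun hx : x ∈ C => Finset.disjoint_left.1 hCC' hx
    simp only [Finset.mem_sdiff]
    tauto
  have hA : (A \ C') \ C = A \ (C ∪ C') := by
    ext x
    simp only [Finset.mem_sdiff, Finset.mem_union]
    tauto
  have hW : (W \ spo G C') \ spo G C = W \ spo G (C ∪ C') := by
    ext x
    simp only [Finset.mem_sdiff, spo_union, Finset.mem_union]
    tauto
  rw [pPolyDeriv, hsign, hW]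
  exact if_congr hcond (by rw [hA]) rfl

lemma pd_pd_log_pPoly_of_not_disjoint {A W C C' : Finset V} (hC : C.Nonempty) (hc : Conn G C)
    (hC' : C'.Nonempty) (hc' : Conn G C') {q : Finset V → ℝ} (hq : pPoly G A W q ≠ 0)
    (h : ¬ (Disjoint (spo G C) (A \ C) ∧ Disjoint (spo G C') (A \ C'))) :
    pd C (pd C' (fun r => Real.log (pPoly G A W r))) q = 0 := by
  rw [pd_pd_log_pPoly hC hc hC' hc' hq]
  by_cases hA' : Disjoint (spo G C') (A \ C')
  · have hA : ¬ Disjoint (spo G C) (A \ C) := fun hA => h ⟨hA, hA'⟩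
    have hD : pPolyDeriv G A W C q = 0 := if_neg fun hcond => hA hcond.2
    have hD' : pPolyDeriv G (A \ C') (W \ spo G C') C q = 0 := by
      by_cases hsep : Disjoint C' (spo G C)
      · rw [pPolyDeriv_sdiff_spo_of_disjoint hsep, if_neg fun hcond => hA hcond.2]
      · exact pPolyDeriv_sdiff_spo_of_not_disjoint (mt disjoint_spo_comm.1 hsep) q
    simp [hD, hD']
  · have hD' : pPolyDeriv G A W C' q = 0 := if_neg fun hcond => hA' hcond.2
    simp [hD', hA']

lemma pd_pd_log_pPoly_of_not_disjoint_spo {A W C C' : Finset V} (hC : C.Nonempty)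
    (hc : Conn G C) (hC' : C'.Nonempty) (hc' : Conn G C') {q : Finset V → ℝ}
    (hq : pPoly G A W q ≠ 0) (h : ¬ Disjoint C' (spo G C)) :
    pd C (pd C' (fun r => Real.log (pPoly G A W r))) q =
      -(pPolyDeriv G A W C' q * pPolyDeriv G A W C q) / pPoly G A W q ^ 2 := by
  rw [pd_pd_log_pPoly hC hc hC' hc' hq,
    pPolyDeriv_sdiff_spo_of_not_disjoint (mt disjoint_spo_comm.1 h)]
  simp

lemma pd_pd_log_pPoly_of_disjoint_spo {A W C C' : Finset V} (hC : C.Nonempty) (hc : Conn G C)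
    (hC' : C'.Nonempty) (hc' : Conn G C') {q : Finset V → ℝ} (hq : pPoly G A W q ≠ 0)
    (hCW : C ⊆ W) (hC'W : C' ⊆ W) (hA : Disjoint (spo G C) (A \ C))
    (hA' : Disjoint (spo G C') (A \ C')) (h : Disjoint C' (spo G C)) :
    pd C (pd C' (fun r => Real.log (pPoly G A W r))) q =
      (-1 : ℝ) ^ ((C ∪ C') \ A).card * pPoly G (A \ (C ∪ C')) (W \ spo G (C ∪ C')) q /
          pPoly G A W q -
        pPolyDeriv G A W C' q * pPolyDeriv G A W C q / pPoly G A W q ^ 2 := by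
  have hCC' : Disjoint (C \ A) (C' \ A) :=
    Finset.disjoint_of_subset_left Finset.sdiff_subset
      (Finset.disjoint_of_subset_right Finset.sdiff_subset (h.mono_right (subset_spo C)).symm)
  rw [pd_pd_log_pPoly hC hc hC' hc' hq, if_pos ⟨hC'W, hA'⟩, pPolyDeriv_sdiff_spo_of_disjoint h,
    if_pos ⟨hCW, hA⟩, Finset.union_sdiff_distrib, Finset.card_union_of_disjoint hCC', pow_add]
  field_simp

end Hessian

variable {V : Type*} [Fintype V] [DecidableEq V]

/-- Second derivatives of `log p_A^V` with respect to `q_C` and `q_{C̄}`, in the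
three cases of the Hessian lemma. -/
theorem stmt16 (G : SimpleGraph V) [DecidableRel G.Adj] (A C C' : Finset V)
    (hC : C.Nonempty) (hc : Conn G C) (hC' : C'.Nonempty) (hc' : Conn G C')
    (q : Finset V → ℝ) (hq : 0 < pPoly G A Finset.univ q) :
    ((spo G C ∩ (A \ C)) ∪ (spo G C' ∩ (A \ C')) ≠ ∅ →
      pd C (pd C' (fun r => Real.log (pPoly G A Finset.univ r))) q = 0) ∧
    ((spo G C ∩ (A \ C)) ∪ (spo G C' ∩ (A \ C')) = ∅ → C' ∩ spo G C ≠ ∅ →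
      pd C (pd C' (fun r => Real.log (pPoly G A Finset.univ r))) q =
        -((-1 : ℝ) ^ (C \ A).card * (-1 : ℝ) ^ (C' \ A).card *
            pPoly G (A \ C) (Finset.univ \ spo G C) q *
            pPoly G (A \ C') (Finset.univ \ spo G C') q) *
          (1 / (pPoly G A Finset.univ q) ^ 2)) ∧
    ((spo G C ∩ (A \ C)) ∪ (spo G C' ∩ (A \ C')) = ∅ → C' ∩ spo G C = ∅ →
      pd C (pd C' (fun r => Real.log (pPoly G A Finset.univ r))) q =
        (-1 : ℝ) ^ ((C ∪ C') \ A).card *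
            pPoly G (A \ (C ∪ C')) (Finset.univ \ spo G (C ∪ C')) q *
            (1 / pPoly G A Finset.univ q) -
          (-1 : ℝ) ^ (C \ A).card * (-1 : ℝ) ^ (C' \ A).card *
            pPoly G (A \ C) (Finset.univ \ spo G C) q *
            pPoly G (A \ C') (Finset.univ \ spo G C') q *
            (1 / (pPoly G A Finset.univ q) ^ 2)) := by
  simp only [ne_eq, Finset.union_eq_empty, ← Finset.disjoint_iff_inter_eq_empty]
  refine ⟨pd_pd_log_pPoly_of_not_disjoint hC hc hC' hc' hq.ne', fun ⟨hA, hA'⟩ h => ?_,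
    fun ⟨hA, hA'⟩ h => ?_⟩
  · rw [pd_pd_log_pPoly_of_not_disjoint_spo hC hc hC' hc' hq.ne' h]
    simp only [pPolyDeriv, Finset.subset_univ, true_and, if_pos hA, if_pos hA']
    ring
  · rw [pd_pd_log_pPoly_of_disjoint_spo hC hc hC' hc' hq.ne' (Finset.subset_univ C)
      (Finset.subset_univ C') hA hA' h]
    simp only [pPolyDeriv, Finset.subset_univ, true_and, if_pos hA, if_pos hA']
    ring

end BMMI
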